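/- arXiv:2410.11826 — 3 statements merged into one kernel-verified Lean document; each statement's English description precedes it below -/
import Mathlib

section
/- Let p be a prior probability density on Θ, and for each i = 1,…,N let p(·|y_i) be the posterior density proportional to p(θ)·L_i(θ) where L_i(θ) = p(y_i|θ) are positive likelihood functions. Let ν_1,…,ν_N ≥ 0 with Σ ν_i = 1. Then the probability measure q* with density proportional to p(θ)·∏_{i=1}^N L_i(θ)^{ν_i} minimizes q ↦ Σ_{i=1}^N ν_i · KL(q, p(·|y_i)) over all probability measures q absolutely continuous with respect to p. -/
open MeasureTheory Real Finset

/-- KL divergence between two probability densities `q` and `r`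
with respect to a base measure `μ`. -/
noncomputable def KLd {Θ : Type*} [MeasurableSpace Θ] (μ : Measure Θ) (q r : Θ → ℝ) : ℝ :=
  ∫ θ, q θ * Real.log (q θ / r θ) ∂μ

/-! Up to the normalizing constants, `log q*` is the `ν`-weighted average of the log-posteriors:
`log q* = ∑ νᵢ log p(·|yᵢ) + C`. Hence for every probability density `q`,
`∑ νᵢ KL(q, p(·|yᵢ)) = KL(q, q*) + C`, and Gibbs' inequality `KL(q, q*) ≥ 0`, obtained by
integrating `x - y ≤ x log (x / y)`, shows that the right-hand side is smallest at `q = q*`. -/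

theorem sub_le_mul_log_div {x y : ℝ} (hx : 0 ≤ x) (hy : 0 < y) : x - y ≤ x * log (x / y) := by
  have h := mul_nonneg hy.le (InformationTheory.klFun_nonneg (div_nonneg hx hy.le))
  have h_eq : y * InformationTheory.klFun (x / y) = x * log (x / y) + y - x := by
    rw [InformationTheory.klFun]; field_simp
  linarith

theorem mul_log_div_eq_sub (x : ℝ) {y : ℝ} (hy : y ≠ 0) :
    x * log (x / y) = x * log x - x * log y := by
  rcases eq_or_ne x 0 with rfl | hx
  · simp
  · rw [log_div hx hy, mul_sub]

theorem sum_mul_mul_log_div_eq {ι : Type*} (s : Finset ι) (ν : ι → ℝ)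
    (hν : ∑ i ∈ s, ν i = 1) (x y c : ℝ) (ys : ι → ℝ) (hy : y ≠ 0) (hys : ∀ i ∈ s, ys i ≠ 0)
    (hlog : log y = ∑ i ∈ s, ν i * log (ys i) + c) :
    ∑ i ∈ s, ν i * (x * log (x / ys i)) = x * log (x / y) + c * x := by
  rw [mul_log_div_eq_sub x hy, hlog,
    sum_congr rfl fun i hi => by rw [mul_log_div_eq_sub x (hys i hi)]]
  simp only [mul_sub, sum_sub_distrib, ← sum_mul, hν, mul_left_comm _ x, ← mul_sum]
  ring

section

variable {Θ : Type*} [MeasurableSpace Θ] {μ : Measure Θ}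

theorem KLd_self (f : Θ → ℝ) : KLd μ f f = 0 := by
  simp [KLd]

theorem KLd_nonneg {f g : Θ → ℝ} (hf : ∀ θ, 0 ≤ f θ) (hg : ∀ θ, 0 < g θ)
    (hf_one : ∫ θ, f θ ∂μ = 1) (hg_one : ∫ θ, g θ ∂μ = 1)
    (hfg : Integrable (fun θ => f θ * log (f θ / g θ)) μ) : 0 ≤ KLd μ f g := by
  have hfi := integrable_of_integral_eq_one hf_one
  have hgi := integrable_of_integral_eq_one hg_one
  calc (0 : ℝ) = ∫ θ, (f θ - g θ) ∂μ := by
        rw [integral_sub hfi hgi, hf_one, hg_one, sub_self]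
    _ ≤ KLd μ f g :=
        integral_mono (hfi.sub hgi) hfg fun θ => sub_le_mul_log_div (hf θ) (hg θ)

variable {ι : Type*} [Fintype ι] {ν : ι → ℝ} {r : Θ → ℝ} {rs : ι → Θ → ℝ} {c : ℝ}

theorem sum_mul_KLd_eq_KLd_add (hν : ∑ i, ν i = 1) (hr : ∀ θ, r θ ≠ 0)
    (hrs : ∀ i θ, rs i θ ≠ 0)
    (hlog : ∀ θ, log (r θ) = ∑ i, ν i * log (rs i θ) + c)
    {f : Θ → ℝ} (hf_one : ∫ θ, f θ ∂μ = 1)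
    (hf : ∀ i, Integrable (fun θ => f θ * log (f θ / rs i θ)) μ) :
    Integrable (fun θ => f θ * log (f θ / r θ)) μ ∧
      ∑ i, ν i * KLd μ f (rs i) = KLd μ f r + c := by
  have hpt θ := sum_mul_mul_log_div_eq univ ν hν (f θ) (r θ) c (rs · θ) (hr θ)
    (fun i _ => hrs i θ) (hlog θ)
  have hsum : Integrable (fun θ => ∑ i, ν i * (f θ * log (f θ / rs i θ))) μ :=
    integrable_finsetSum _ fun i _ => (hf i).const_mul (ν i)
  have hfi := integrable_of_integral_eq_one hf_one
  have hfr : Integrable (fun θ => f θ * log (f θ / r θ)) μ := by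
    refine (hsum.sub (hfi.const_mul c)).congr (Filter.Eventually.of_forall fun θ => ?_)
    simp only [Pi.sub_apply, hpt]; ring
  refine ⟨hfr, ?_⟩
  calc ∑ i, ν i * KLd μ f (rs i)
      = ∫ θ, ∑ i, ν i * (f θ * log (f θ / rs i θ)) ∂μ := by
        rw [integral_finsetSum _ fun i _ => (hf i).const_mul (ν i)]
        simp only [KLd, integral_const_mul]
    _ = ∫ θ, (f θ * log (f θ / r θ) + c * f θ) ∂μ := by simp only [hpt]
    _ = KLd μ f r + c := by
        rw [integral_add hfr (hfi.const_mul c), integral_const_mul, hf_one, mul_one, KLd]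

theorem sum_mul_KLd_le_of_log_eq (hν : ∑ i, ν i = 1) (hr : ∀ θ, 0 < r θ)
    (hr_one : ∫ θ, r θ ∂μ = 1)
    (hrs : ∀ i θ, rs i θ ≠ 0) (hlog : ∀ θ, log (r θ) = ∑ i, ν i * log (rs i θ) + c)
    (hr_KL : ∀ i, Integrable (fun θ => r θ * log (r θ / rs i θ)) μ)
    {f : Θ → ℝ} (hf : ∀ θ, 0 ≤ f θ) (hf_one : ∫ θ, f θ ∂μ = 1)
    (hf_KL : ∀ i, Integrable (fun θ => f θ * log (f θ / rs i θ)) μ) :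
    ∑ i, ν i * KLd μ r (rs i) ≤ ∑ i, ν i * KLd μ f (rs i) := by
  have hr0 θ := (hr θ).ne'
  obtain ⟨-, hr_sum⟩ := sum_mul_KLd_eq_KLd_add hν hr0 hrs hlog hr_one hr_KL
  obtain ⟨hfr, hf_sum⟩ := sum_mul_KLd_eq_KLd_add hν hr0 hrs hlog hf_one hf_KL
  rw [hr_sum, hf_sum, KLd_self r]
  linarith [KLd_nonneg hf hr hf_one hr_one hfr]

end

theorem log_pooling_minimizes_weighted_KL_general
    {Θ : Type*} [MeasurableSpace Θ] (μ : Measure Θ) (N : ℕ)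
    (p : Θ → ℝ) (L : Fin N → Θ → ℝ) (ν : Fin N → ℝ)
    (hp_pos : ∀ θ, 0 < p θ)
    (hL_pos : ∀ i θ, 0 < L i θ)
    (hν_sum : ∑ i, ν i = 1)
    -- normalizing constants of the posteriors are finite and positive
    (Z : Fin N → ℝ) (hZ_pos : ∀ i, 0 < Z i)
    -- posterior densities
    (post : Fin N → Θ → ℝ) (hpost : ∀ i θ, post i θ = p θ * L i θ / Z i)
    -- normalizing constant of the logarithmic pool is finite and positive
    (Zstar : ℝ) (hZstar : Zstar = ∫ θ, p θ * ∏ i, (L i θ) ^ (ν i) ∂μ)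
    (hZstar_pos : 0 < Zstar)
    (qstar : Θ → ℝ) (hqstar : ∀ θ, qstar θ = p θ * (∏ i, (L i θ) ^ (ν i)) / Zstar)
    (hqstar_KL : ∀ i, Integrable (fun θ => qstar θ * Real.log (qstar θ / post i θ)) μ) :
    ∀ q : Θ → ℝ, Measurable q → (∀ θ, 0 ≤ q θ) → ∫ θ, q θ ∂μ = 1 →
      (∀ i, Integrable (fun θ => q θ * Real.log (q θ / post i θ)) μ) →
      ∑ i, ν i * KLd μ qstar (post i) ≤ ∑ i, ν i * KLd μ q (post i) := by
  intro q _ hq hq_one hq_KL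
  have hprod_pos θ : 0 < ∏ i, L i θ ^ ν i :=
    prod_pos fun i _ => rpow_pos_of_pos (hL_pos i θ) _
  have hqstar_pos θ : 0 < qstar θ :=
    hqstar θ ▸ div_pos (mul_pos (hp_pos θ) (hprod_pos θ)) hZstar_pos
  have hpost_pos i θ : 0 < post i θ :=
    hpost i θ ▸ div_pos (mul_pos (hp_pos θ) (hL_pos i θ)) (hZ_pos i)
  have hqstar_one : ∫ θ, qstar θ ∂μ = 1 := by
    simp only [hqstar, integral_div, ← hZstar, div_self hZstar_pos.ne']
  have hlog_post i θ : log (post i θ) = log (p θ) + log (L i θ) - log (Z i) := by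
    rw [hpost, log_div (mul_pos (hp_pos θ) (hL_pos i θ)).ne' (hZ_pos i).ne',
      log_mul (hp_pos θ).ne' (hL_pos i θ).ne']
  have hlog_qstar θ : log (qstar θ) = log (p θ) + ∑ i, ν i * log (L i θ) - log Zstar := by
    rw [hqstar, log_div (mul_pos (hp_pos θ) (hprod_pos θ)).ne' hZstar_pos.ne',
      log_mul (hp_pos θ).ne' (hprod_pos θ).ne',
      log_prod fun i _ => (rpow_pos_of_pos (hL_pos i θ) _).ne']
    simp only [log_rpow (hL_pos _ θ)]
  have hlog θ : log (qstar θ) =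
      ∑ i, ν i * log (post i θ) + (∑ i, ν i * log (Z i) - log Zstar) := by
    simp only [hlog_qstar, hlog_post, mul_sub, mul_add, sum_sub_distrib, sum_add_distrib,
      ← sum_mul, hν_sum]
    ring
  exact sum_mul_KLd_le_of_log_eq hν_sum hqstar_pos hqstar_one (fun i θ => (hpost_pos i θ).ne')
    hlog hqstar_KL hq hq_one hq_KL

/-- The logarithmic pooling `q*(θ) ∝ p(θ) ∏ᵢ Lᵢ(θ)^{νᵢ}` of the posteriors
`p(·|yᵢ) ∝ p·Lᵢ` minimizes `q ↦ ∑ᵢ νᵢ KL(q, p(·|yᵢ))` over all probability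
densities `q` (absolutely continuous w.r.t. the positive prior `p`). -/
theorem log_pooling_minimizes_weighted_KL
    {Θ : Type*} [MeasurableSpace Θ] (μ : Measure Θ) (N : ℕ)
    (p : Θ → ℝ) (L : Fin N → Θ → ℝ) (ν : Fin N → ℝ)
    (hp_meas : Measurable p) (hp_pos : ∀ θ, 0 < p θ)
    (hp_int : ∫ θ, p θ ∂μ = 1)
    (hL_meas : ∀ i, Measurable (L i)) (hL_pos : ∀ i θ, 0 < L i θ)
    (hν_nonneg : ∀ i, 0 ≤ ν i) (hν_sum : ∑ i, ν i = 1)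
    -- normalizing constants of the posteriors are finite and positive
    (Z : Fin N → ℝ) (hZ : ∀ i, Z i = ∫ θ, p θ * L i θ ∂μ)
    (hZ_int : ∀ i, Integrable (fun θ => p θ * L i θ) μ) (hZ_pos : ∀ i, 0 < Z i)
    -- posterior densities
    (post : Fin N → Θ → ℝ) (hpost : ∀ i θ, post i θ = p θ * L i θ / Z i)
    -- normalizing constant of the logarithmic pool is finite and positive
    (Zstar : ℝ) (hZstar : Zstar = ∫ θ, p θ * ∏ i, (L i θ) ^ (ν i) ∂μ)
    (hZstar_int : Integrable (fun θ => p θ * ∏ i, (L i θ) ^ (ν i)) μ)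
    (hZstar_pos : 0 < Zstar)
    (qstar : Θ → ℝ) (hqstar : ∀ θ, qstar θ = p θ * (∏ i, (L i θ) ^ (ν i)) / Zstar)
    (hqstar_KL : ∀ i, Integrable (fun θ => qstar θ * Real.log (qstar θ / post i θ)) μ) :
    ∀ q : Θ → ℝ, Measurable q → (∀ θ, 0 ≤ q θ) → ∫ θ, q θ ∂μ = 1 →
      (∀ i, Integrable (fun θ => q θ * Real.log (q θ / post i θ)) μ) →
      ∑ i, ν i * KLd μ qstar (post i) ≤ ∑ i, ν i * KLd μ q (post i) :=
  log_pooling_minimizes_weighted_KL_general μ N p L ν hp_pos hL_pos hν_sum Z hZ_pos post hpost Zstar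
    hZstar hZstar_pos qstar hqstar hqstar_KL
end

section
/- With the same setup as SPCE (θ_0,…,θ_L i.i.d. from prior p(θ), Y_{1:K} generated given θ_0 with likelihoods p(y_k|θ_0,ξ_k)), SPCE(ξ_1,…,ξ_K) is a lower bound of the total expected information gain I_total = E_{p(θ_0)∏_k p(y_k|θ_0,ξ_k)}[ log( ∏_k p(Y_k|θ_0,ξ_k) / p(Y_{1:K}|ξ_{1:K}) ) ], where p(y_{1:K}|ξ_{1:K}) = E_{θ~p}[∏_k p(y_k|θ,ξ_k)]. -/
open MeasureTheory Real Finset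

/-!
Write `a = p(y | θ₀)`, `m = p(y)` for the marginal and `v = (1/(L+1)) ∑ₗ p(y | θₗ)`, and integrate
over `P^{L+1} ⊗ ν^K`. Then `I_total - SPCE = ∫ a log (v / m) ≥ ∫ a (1 - m / v)` by
`log t ≤ t - 1`. For fixed `y`, exchangeability of `θ₀, …, θ_L` gives
`E[p(y | θ₀) / ∑ₗ p(y | θₗ)] = 1/(L+1)`, so `∫ a m / v = ∫ m = ∫ a` and the bound is `0`.
-/

section SymmetricRatio

variable {Θ κ : Type*} [MeasurableSpace Θ] [Fintype κ] (P : Measure Θ) {u : Θ → ℝ}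

lemma integrable_apply_div_sum_pi [IsProbabilityMeasure P] (hu : Measurable u)
    (hu_nonneg : ∀ θ, 0 ≤ u θ) (j : κ) :
    Integrable (fun θs : κ → Θ => u (θs j) / ∑ ℓ, u (θs ℓ)) (Measure.pi fun _ => P) := by
  refine (integrable_const (1 : ℝ)).mono' (by fun_prop : Measurable _).aestronglyMeasurable
    (ae_of_all _ fun θs => ?_)
  have hle : u (θs j) ≤ ∑ ℓ, u (θs ℓ) := single_le_sum (fun ℓ _ => hu_nonneg _) (mem_univ j)
  have hsum : 0 ≤ ∑ ℓ, u (θs ℓ) := (hu_nonneg _).trans hle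
  rw [norm_of_nonneg (div_nonneg (hu_nonneg _) hsum)]
  exact div_le_one_of_le₀ hle hsum

lemma integral_apply_div_sum_pi_eq [SigmaFinite P] (i j : κ) :
    ∫ θs : κ → Θ, u (θs i) / ∑ ℓ, u (θs ℓ) ∂(Measure.pi fun _ => P)
      = ∫ θs : κ → Θ, u (θs j) / ∑ ℓ, u (θs ℓ) ∂(Measure.pi fun _ => P) := by
  classical
  have hswap := measurePreserving_arrowCongr' (fun _ => P) (fun _ => P) (Equiv.swap i j)
    (MeasurableEquiv.refl Θ) fun _ => MeasurePreserving.id P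
  rw [← hswap.integral_comp']
  congr 1 with θs
  simp [MeasurableEquiv.arrowCongr', Equiv.arrowCongr',
    Equiv.sum_comp (Equiv.swap i j) fun ℓ => u (θs ℓ)]

lemma integral_apply_div_sum_pi [IsProbabilityMeasure P] (hu : Measurable u)
    (hu_pos : ∀ θ, 0 < u θ) (j : κ) :
    ∫ θs : κ → Θ, u (θs j) / ∑ ℓ, u (θs ℓ) ∂(Measure.pi fun _ => P)
      = (Fintype.card κ : ℝ)⁻¹ := by
  have hsum :
      ∑ i : κ, ∫ θs : κ → Θ, u (θs i) / ∑ ℓ, u (θs ℓ) ∂(Measure.pi fun _ => P) = 1 := by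
    rw [← integral_finsetSum _ fun i _ =>
      integrable_apply_div_sum_pi P hu (fun θ => (hu_pos θ).le) i]
    have : ∀ θs : κ → Θ, ∑ i, u (θs i) / ∑ ℓ, u (θs ℓ) = 1 := fun θs => by
      rw [← sum_div, div_self (sum_pos (fun ℓ _ => hu_pos _) ⟨j, mem_univ j⟩).ne']
    simp [this]
  simp_rw [integral_apply_div_sum_pi_eq P _ j, sum_const, card_univ, nsmul_eq_mul] at hsum
  exact eq_inv_of_mul_eq_one_right hsum

end SymmetricRatio

lemma mul_log_div_le_mul_log_div_add {a m v : ℝ} (ha : 0 ≤ a) (hm : 0 < m) (hv : 0 < v) :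
    a * log (a / v) ≤ a * log (a / m) + (a * (m / v) - a) := by
  rcases ha.eq_or_lt with rfl | ha
  · simp
  have hsplit : log (a / v) = log (a / m) + log (m / v) := by
    rw [← log_mul (by positivity) (by positivity)]
    field_simp
  have := mul_le_mul_of_nonneg_left (log_le_sub_one_of_pos (div_pos hm hv)) ha.le
  rw [hsplit]
  linarith

lemma integral_mul_log_div_le_of_integral_mul_div_le {α : Type*} [MeasurableSpace α]
    {μ : Measure α} {a m v : α → ℝ} (ha : ∀ x, 0 ≤ a x) (hm : ∀ x, 0 < m x) (hv : ∀ x, 0 < v x)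
    (ha_int : Integrable a μ) (hamv_int : Integrable (fun x => a x * (m x / v x)) μ)
    (hv_int : Integrable (fun x => a x * log (a x / v x)) μ)
    (hm_int : Integrable (fun x => a x * log (a x / m x)) μ)
    (hle : ∫ x, a x * (m x / v x) ∂μ ≤ ∫ x, a x ∂μ) :
    ∫ x, a x * log (a x / v x) ∂μ ≤ ∫ x, a x * log (a x / m x) ∂μ := by
  have := integral_mono hv_int (hm_int.add (hamv_int.sub ha_int))
    fun x => mul_log_div_le_mul_log_div_add (ha x) (hm x) (hv x)
  rw [integral_add' hm_int (hamv_int.sub ha_int), integral_sub' hamv_int ha_int] at this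
  linarith

lemma mul_div_mean_eq {Θ : Type*} {u : Θ → ℝ} (n : ℕ) (hu_pos : ∀ θ, 0 < u θ) (c : ℝ)
    (θs : Fin (n + 1) → Θ) :
    u (θs 0) * (c / (1 / (n + 1 : ℝ) * ∑ ℓ, u (θs ℓ)))
      = ((n + 1 : ℝ) * c) * (u (θs 0) / ∑ ℓ, u (θs ℓ)) := by
  have := (sum_pos (fun ℓ _ => hu_pos (θs ℓ)) ⟨0, mem_univ 0⟩).ne'
  field_simp

section MeanRatio

variable {Θ : Type*} [MeasurableSpace Θ] (P : Measure Θ) [IsProbabilityMeasure P] {u : Θ → ℝ}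

lemma integrable_mul_div_mean_pi (n : ℕ) (hu : Measurable u) (hu_pos : ∀ θ, 0 < u θ) (c : ℝ) :
    Integrable
      (fun θs : Fin (n + 1) → Θ => u (θs 0) * (c / (1 / (n + 1 : ℝ) * ∑ ℓ, u (θs ℓ))))
      (Measure.pi fun _ => P) := by
  simp_rw [mul_div_mean_eq n hu_pos]
  exact (integrable_apply_div_sum_pi P hu (fun θ => (hu_pos θ).le) 0).const_mul _

lemma integral_mul_div_mean_pi (n : ℕ) (hu : Measurable u) (hu_pos : ∀ θ, 0 < u θ) (c : ℝ) :
    ∫ θs : Fin (n + 1) → Θ, u (θs 0) * (c / (1 / (n + 1 : ℝ) * ∑ ℓ, u (θs ℓ)))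
      ∂(Measure.pi fun _ => P) = c := by
  simp_rw [mul_div_mean_eq n hu_pos, integral_const_mul, integral_apply_div_sum_pi P hu hu_pos,
    Fintype.card_fin]
  push_cast
  field_simp

end MeanRatio

section Density

variable {Θ 𝒴 : Type*} [MeasurableSpace Θ] [MeasurableSpace 𝒴] (P : Measure Θ)
  {μ : Measure 𝒴} [SigmaFinite μ] {f : Θ → 𝒴 → ℝ}

lemma integrable_uncurry_of_integral_eq_one [IsFiniteMeasure P]
    (hf_meas : Measurable (Function.uncurry f))
    (hf_nonneg : ∀ θ y, 0 ≤ f θ y) (hf_int : ∀ θ, ∫ y, f θ y ∂μ = 1) :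
    Integrable (Function.uncurry f) (P.prod μ) := by
  rw [integrable_prod_iff hf_meas.aestronglyMeasurable]
  refine ⟨ae_of_all _ fun θ => .of_integral_ne_zero (by simp [hf_int]), ?_⟩
  simp_rw [Function.uncurry_apply_pair, norm_of_nonneg (hf_nonneg _ _), hf_int]
  exact integrable_const 1

lemma integrable_joint_mul_div_mean [IsProbabilityMeasure P] (n : ℕ)
    (hf_meas : Measurable (Function.uncurry f)) (hf_pos : ∀ θ y, 0 < f θ y) {m : 𝒴 → ℝ}
    (hm_meas : Measurable m) (hm_int : Integrable m μ) (hm_nonneg : ∀ y, 0 ≤ m y) :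
    Integrable (fun z : (Fin (n + 1) → Θ) × 𝒴 =>
        f (z.1 0) z.2 * (m z.2 / (1 / (n + 1 : ℝ) * ∑ ℓ, f (z.1 ℓ) z.2)))
      ((Measure.pi fun _ => P).prod μ) := by
  have hslice : ∀ y, Measurable fun θ => f θ y := fun y => hf_meas.comp measurable_prodMk_right
  have hcoord : ∀ ℓ, Measurable fun z : (Fin (n + 1) → Θ) × 𝒴 => f (z.1 ℓ) z.2 :=
    fun ℓ => hf_meas.comp (by fun_prop : Measurable fun z : (Fin (n + 1) → Θ) × 𝒴 => (z.1 ℓ, z.2))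
  rw [integrable_prod_iff' (by fun_prop : Measurable _).aestronglyMeasurable]
  refine ⟨ae_of_all _ fun y => integrable_mul_div_mean_pi P n (hslice y) (hf_pos · y) (m y),
    hm_int.congr (ae_of_all _ fun y => ?_)⟩
  conv_lhs => rw [← integral_mul_div_mean_pi P n (hslice y) (hf_pos · y) (m y)]
  refine integral_congr_ae (ae_of_all _ fun θs => (norm_of_nonneg ?_).symm)
  have := sum_pos (fun ℓ _ => hf_pos (θs ℓ) y) ⟨0, mem_univ 0⟩
  have := hf_pos (θs 0) y
  have := hm_nonneg y
  positivity

lemma integral_joint_mul_div_mean [IsProbabilityMeasure P] (n : ℕ)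
    (hf_meas : Measurable (Function.uncurry f)) (hf_pos : ∀ θ y, 0 < f θ y) {m : 𝒴 → ℝ}
    (hm_meas : Measurable m) (hm_int : Integrable m μ) (hm_nonneg : ∀ y, 0 ≤ m y) :
    ∫ z : (Fin (n + 1) → Θ) × 𝒴,
        f (z.1 0) z.2 * (m z.2 / (1 / (n + 1 : ℝ) * ∑ ℓ, f (z.1 ℓ) z.2))
      ∂((Measure.pi fun _ => P).prod μ) = ∫ y, m y ∂μ := by
  rw [integral_prod_symm _
    (integrable_joint_mul_div_mean P n hf_meas hf_pos hm_meas hm_int hm_nonneg)]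
  exact integral_congr_ae (ae_of_all _ fun y =>
    integral_mul_div_mean_pi P n (hf_meas.comp measurable_prodMk_right) (hf_pos · y) (m y))

end Density

section EvalProd

variable {Θ κ 𝒴 : Type*} [MeasurableSpace Θ] [MeasurableSpace 𝒴] [Fintype κ] {P : Measure Θ}
  [IsProbabilityMeasure P] {μ : Measure 𝒴} [SigmaFinite μ] {g : Θ × 𝒴 → ℝ}

variable (P μ) in
lemma measurePreserving_eval_prod (j : κ) :
    MeasurePreserving (fun z : (κ → Θ) × 𝒴 => (z.1 j, z.2))
      ((Measure.pi fun _ => P).prod μ) (P.prod μ) :=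
  (measurePreserving_eval _ j).prod (.id μ)

lemma integral_comp_eval_prod (hg : AEStronglyMeasurable g (P.prod μ)) (j : κ) :
    ∫ z : (κ → Θ) × 𝒴, g (z.1 j, z.2) ∂((Measure.pi fun _ => P).prod μ)
      = ∫ p, g p ∂(P.prod μ) := by
  have hT := measurePreserving_eval_prod P μ j
  rw [← hT.map_eq] at hg ⊢
  exact (integral_map hT.measurable.aemeasurable hg).symm

end EvalProd

theorem SPCE_le_EIG_of_density {Θ 𝒴 : Type*} [MeasurableSpace Θ] [MeasurableSpace 𝒴]
    {P : Measure Θ} [IsProbabilityMeasure P] {μ : Measure 𝒴} [SigmaFinite μ] (n : ℕ)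
    {f : Θ → 𝒴 → ℝ} (hf_meas : Measurable (Function.uncurry f)) (hf_pos : ∀ θ y, 0 < f θ y)
    (hf_int : ∀ θ, ∫ y, f θ y ∂μ = 1) {m : 𝒴 → ℝ} (hm : ∀ y, m y = ∫ θ, f θ y ∂P)
    (hm_pos : ∀ y, 0 < m y)
    (hI_int : Integrable (fun p : Θ × 𝒴 => f p.1 p.2 * log (f p.1 p.2 / m p.2)) (P.prod μ))
    (hS_int : Integrable (fun z : (Fin (n + 1) → Θ) × 𝒴 =>
        f (z.1 0) z.2 * log (f (z.1 0) z.2 / (1 / (n + 1 : ℝ) * ∑ ℓ, f (z.1 ℓ) z.2)))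
      ((Measure.pi fun _ => P).prod μ)) :
    ∫ θs : Fin (n + 1) → Θ, ∫ y,
        f (θs 0) y * log (f (θs 0) y / (1 / (n + 1 : ℝ) * ∑ ℓ, f (θs ℓ) y)) ∂μ
      ∂(Measure.pi fun _ => P)
      ≤ ∫ θ, ∫ y, f θ y * log (f θ y / m y) ∂μ ∂P := by
  have hT := measurePreserving_eval_prod P μ (0 : Fin (n + 1))
  have hf_int' := integrable_uncurry_of_integral_eq_one P hf_meas
    (fun θ y => (hf_pos θ y).le) hf_int
  have hm_eq : m = fun y => ∫ θ, f θ y ∂P := funext hm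
  have hm_meas : Measurable m :=
    hm_eq ▸ hf_meas.stronglyMeasurable.integral_prod_left'.measurable
  have hm_int : Integrable m μ := hm_eq ▸ hf_int'.integral_prod_right
  rw [← integral_prod _ hS_int, ← integral_prod _ hI_int,
    ← integral_comp_eval_prod hI_int.aestronglyMeasurable (0 : Fin (n + 1))]
  refine integral_mul_log_div_le_of_integral_mul_div_le
    (a := fun z : (Fin (n + 1) → Θ) × 𝒴 => f (z.1 0) z.2)
    (m := fun z => m z.2) (fun z => (hf_pos _ _).le) (fun z => hm_pos z.2)
    (fun z => mul_pos (by positivity) (sum_pos (fun ℓ _ => hf_pos _ _) ⟨0, mem_univ 0⟩))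
    ((hT.integrable_comp hf_meas.aestronglyMeasurable).mpr hf_int')
    (integrable_joint_mul_div_mean P n hf_meas hf_pos hm_meas hm_int (hm_pos · |>.le)) hS_int
    ((hT.integrable_comp hI_int.aestronglyMeasurable).mpr hI_int) (le_of_eq ?_)
  rw [integral_joint_mul_div_mean P n hf_meas hf_pos hm_meas hm_int (hm_pos · |>.le), hm_eq]
  exact (integral_prod_symm _ hf_int').symm.trans
    (integral_comp_eval_prod hf_meas.aestronglyMeasurable 0).symm

/-- SPCE is a lower bound on the total expected information gain: with
`θ₀,…,θ_L` i.i.d. from the prior `P`, `Y₁,…,Y_K` drawn given `θ₀` with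
likelihoods `lik k θ₀ ·`, and marginal
`pmarg ys = E_{θ~P}[∏ₖ lik k θ (ys k)]`, one has `SPCE ≤ I_total`. -/
theorem SPCE_le_total_EIG
    {Θ Y : Type*} [MeasurableSpace Θ] [MeasurableSpace Y]
    (P : Measure Θ) [IsProbabilityMeasure P]
    (ν : Measure Y) [SigmaFinite ν]
    (K L : ℕ)
    (lik : Fin K → Θ → Y → ℝ)
    (hlik_meas : ∀ k, Measurable (Function.uncurry (lik k)))
    (hlik_pos : ∀ k θ y, 0 < lik k θ y)
    (hlik_int : ∀ k θ, ∫ y, lik k θ y ∂ν = 1)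
    (pmarg : (Fin K → Y) → ℝ)
    (hpmarg : ∀ ys, pmarg ys = ∫ θ, ∏ k, lik k θ (ys k) ∂P)
    (hpmarg_pos : ∀ ys, 0 < pmarg ys)
    -- integrability of the I_total integrand
    (hItot_int : Integrable (fun z : Θ × (Fin K → Y) =>
      (∏ k, lik k z.1 (z.2 k)) * Real.log ((∏ k, lik k z.1 (z.2 k)) / pmarg z.2))
      (P.prod (Measure.pi fun _ => ν)))
    -- integrability of the SPCE integrand
    (hSPCE_int : Integrable (fun z : (Fin (L + 1) → Θ) × (Fin K → Y) =>
      (∏ k, lik k (z.1 0) (z.2 k)) *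
        Real.log ((∏ k, lik k (z.1 0) (z.2 k)) /
          ((1 / (L + 1 : ℝ)) * ∑ ℓ, ∏ k, lik k (z.1 ℓ) (z.2 k))))
      ((Measure.pi fun _ => P).prod (Measure.pi fun _ => ν))) :
    (∫ θs : Fin (L + 1) → Θ,
        ∫ ys : Fin K → Y,
          (∏ k, lik k (θs 0) (ys k)) *
            Real.log ((∏ k, lik k (θs 0) (ys k)) /
              ((1 / (L + 1 : ℝ)) * ∑ ℓ, ∏ k, lik k (θs ℓ) (ys k)))
          ∂(Measure.pi fun _ => ν)
      ∂(Measure.pi fun _ => P))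
    ≤ ∫ θ₀ : Θ,
        ∫ ys : Fin K → Y,
          (∏ k, lik k θ₀ (ys k)) *
            Real.log ((∏ k, lik k θ₀ (ys k)) / pmarg ys)
          ∂(Measure.pi fun _ => ν)
      ∂P := by
  have hmeas : Measurable (Function.uncurry fun θ (ys : Fin K → Y) => ∏ k, lik k θ (ys k)) :=
    Finset.measurable_prod _ fun k _ =>
      (hlik_meas k).comp (measurable_fst.prodMk ((measurable_pi_apply k).comp measurable_snd))
  have hnorm (θ : Θ) : ∫ ys : Fin K → Y, ∏ k, lik k θ (ys k) ∂(Measure.pi fun _ => ν) = 1 := by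
    rw [integral_fintype_prod_eq_prod (fun k => lik k θ)]
    exact prod_eq_one fun k _ => hlik_int k θ
  exact SPCE_le_EIG_of_density L hmeas (fun θ ys => prod_pos fun k _ => hlik_pos k θ (ys k))
    hnorm hpmarg hpmarg_pos hItot_int hSPCE_int
end

section
/- With θ_0 ~ p(θ), Y_{1:K} ~ ∏_k p(y_k|θ_0,ξ_k), and θ_1,…,θ_L i.i.d. ~ p(θ) independent of (θ_0, Y_{1:K}), define SNMC = E[log( ∏_{k=1}^K p(Y_k|θ_0,ξ_k) / ((1/L) Σ_{ℓ=1}^L ∏_{k=1}^K p(Y_k|θ_ℓ,ξ_k)) )]. Then SNMC is an upper bound of the total expected information gain I_total = E[log( ∏_k p(Y_k|θ_0,ξ_k) / p(Y_{1:K}|ξ_{1:K}) )] with p(y_{1:K}|ξ_{1:K}) = E_{θ~p}[∏_k p(y_k|θ,ξ_k)]. -/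
/-!
Write `f θ y = ∏ₖ p(yₖ | θ, ξₖ)` and `D = (1/L) ∑ₗ f θₗ y`. The gap between the two sides is
`∫ y, E[f θ₀ y · log (p(y) / D)]`. For fixed `y`, `log (p / D) ≥ 1 - D / p`, and since `θ₀` is
independent of `θ₁, …, θ_L` with `E[f θ y] = p(y)`, the inner expectation is at least
`p(y) - p(y) · p(y) / p(y) = 0`.
-/

open MeasureTheory ProbabilityTheory Real Finset

theorem mul_log_div_sub_mul_log_div {a b c : ℝ} (ha : a ≠ 0) (hb : b ≠ 0) (hc : c ≠ 0) :
    a * log (a / b) - a * log (a / c) = a * log (c / b) := by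
  rw [log_div ha hb, log_div ha hc, log_div hc hb]
  ring

theorem MeasureTheory.MeasurePreserving.integral_comp_of_aestronglyMeasurable
    {α β E : Type*} [MeasurableSpace α] [MeasurableSpace β] [NormedAddCommGroup E]
    [NormedSpace ℝ E] {μ : Measure α} {ν : Measure β} {f : α → β} {g : β → E}
    (hf : MeasurePreserving f μ ν) (hg : AEStronglyMeasurable g ν) :
    ∫ x, g (f x) ∂μ = ∫ y, g y ∂ν := by
  rw [← hf.map_eq] at hg ⊢
  exact (integral_map hf.measurable.aemeasurable hg).symm

theorem measurePreserving_eval_prod_s9 {ι Θ Z : Type*} [Fintype ι] [MeasurableSpace Θ]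
    [MeasurableSpace Z] (P : Measure Θ) [IsProbabilityMeasure P] (ν : Measure Z) [SFinite ν]
    (i : ι) :
    MeasurePreserving (fun w : (ι → Θ) × Z => (w.1 i, w.2))
      ((Measure.pi fun _ => P).prod ν) (P.prod ν) :=
  (measurePreserving_eval _ i).prod (.id ν)

theorem one_div_mul_sum_pos {L : ℕ} (hL : 0 < L) {f : Fin L → ℝ} (hf : ∀ ℓ, 0 < f ℓ) :
    0 < (1 / (L : ℝ)) * ∑ ℓ, f ℓ :=
  mul_pos (by positivity) (sum_pos (fun ℓ _ => hf ℓ) (univ_nonempty_iff.2 ⟨⟨0, hL⟩⟩))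

theorem integral_mul_log_div_nonneg {Ω : Type*} [MeasurableSpace Ω] {μ : Measure Ω}
    {X D : Ω → ℝ} {c : ℝ} (hc : 0 < c) (hX_nonneg : ∀ ω, 0 ≤ X ω) (hD_pos : ∀ ω, 0 < D ω)
    (hX : Integrable X μ) (hXD : Integrable (fun ω => X ω * D ω) μ)
    (hXD_eq : ∫ ω, X ω * D ω ∂μ = c * ∫ ω, X ω ∂μ) :
    0 ≤ ∫ ω, X ω * log (c / D ω) ∂μ := by
  by_cases hlog : Integrable (fun ω => X ω * log (c / D ω)) μ
  swap
  · rw [integral_undef hlog]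
  -- `1 - D / c ≤ log (c / D)` is `log x ≤ x - 1` at `x = D / c`
  have hpt : ∀ ω, X ω - c⁻¹ * (X ω * D ω) ≤ X ω * log (c / D ω) := fun ω => by
    have := one_sub_inv_le_log_of_pos (div_pos hc (hD_pos ω))
    rw [inv_div] at this
    calc X ω - c⁻¹ * (X ω * D ω) = X ω * (1 - D ω / c) := by ring
      _ ≤ X ω * log (c / D ω) := mul_le_mul_of_nonneg_left this (hX_nonneg ω)
  calc (0 : ℝ) = ∫ ω, X ω - c⁻¹ * (X ω * D ω) ∂μ := by
        rw [integral_sub hX (hXD.const_mul _), integral_const_mul, hXD_eq,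
          inv_mul_cancel_left₀ hc.ne', sub_self]
    _ ≤ ∫ ω, X ω * log (c / D ω) ∂μ := integral_mono (hX.sub (hXD.const_mul _)) hlog hpt

section ProductOfCopies

variable {ι Θ : Type*} [Fintype ι] [MeasurableSpace Θ] (P : Measure Θ) [IsProbabilityMeasure P]
  {g h : Θ → ℝ} {i j : ι}

theorem indepFun_comp_eval_comp_eval (hij : i ≠ j) (hg : AEMeasurable g P)
    (hh : AEMeasurable h P) :
    IndepFun (fun x : ι → Θ => g (x i)) (fun x => h (x j)) (Measure.pi fun _ => P) := by
  have hcoord : IndepFun (Function.eval i) (Function.eval j) (Measure.pi fun _ => P) :=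
    (iIndepFun_pi (X := fun _ => id) fun _ => aemeasurable_id).indepFun hij
  exact hcoord.comp₀ (measurable_pi_apply i).aemeasurable (measurable_pi_apply j).aemeasurable
    (by rwa [(measurePreserving_eval _ i).map_eq]) (by rwa [(measurePreserving_eval _ j).map_eq])

theorem integrable_comp_eval_mul_comp_eval (hij : i ≠ j) (hg : Integrable g P)
    (hh : Integrable h P) :
    Integrable (fun x : ι → Θ => g (x i) * h (x j)) (Measure.pi fun _ => P) :=
  (indepFun_comp_eval_comp_eval P hij hg.aemeasurable hh.aemeasurable).integrable_mul
    (integrable_comp_eval hg) (integrable_comp_eval hh)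

theorem integral_comp_eval_mul_comp_eval (hij : i ≠ j) (hg : AEMeasurable g P)
    (hh : AEMeasurable h P) :
    ∫ x : ι → Θ, g (x i) * h (x j) ∂(Measure.pi fun _ => P) = (∫ θ, g θ ∂P) * ∫ θ, h θ ∂P := by
  rw [(indepFun_comp_eval_comp_eval P hij hg hh).integral_fun_mul_eq_mul_integral
    (hg.comp_quasiMeasurePreserving (Measure.quasiMeasurePreserving_eval _ i)).aestronglyMeasurable
    (hh.comp_quasiMeasurePreserving (Measure.quasiMeasurePreserving_eval _ j)).aestronglyMeasurable,
    integral_comp_eval hg.aestronglyMeasurable, integral_comp_eval hh.aestronglyMeasurable]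

end ProductOfCopies

theorem integral_mul_log_div_average_nonneg {Θ : Type*} [MeasurableSpace Θ] (P : Measure Θ)
    [IsProbabilityMeasure P] {L : ℕ} (hL : 0 < L) {g : Θ → ℝ} (hg_pos : ∀ θ, 0 < g θ)
    (hg : Integrable g P) :
    0 ≤ ∫ θs : Fin (L + 1) → Θ,
      g (θs 0) * log ((∫ θ, g θ ∂P) / ((1 / (L : ℝ)) * ∑ ℓ : Fin L, g (θs ℓ.succ)))
      ∂(Measure.pi fun _ => P) := by
  have hc : 0 < ∫ θ, g θ ∂P :=
    (integral_pos_iff_support_of_nonneg (fun θ => (hg_pos θ).le) hg).2 (by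
      simp [Function.support_eq_univ fun θ => (hg_pos θ).ne'])
  have hmul_avg : ∀ θs : Fin (L + 1) → Θ,
      g (θs 0) * ((1 / (L : ℝ)) * ∑ ℓ : Fin L, g (θs ℓ.succ))
        = (1 / (L : ℝ)) * ∑ ℓ : Fin L, g (θs 0) * g (θs ℓ.succ) := fun θs => by
    rw [mul_left_comm, mul_sum]
  have hpair : ∀ ℓ : Fin L, Integrable (fun θs : Fin (L + 1) → Θ => g (θs 0) * g (θs ℓ.succ))
      (Measure.pi fun _ => P) := fun ℓ =>
    integrable_comp_eval_mul_comp_eval P (Fin.succ_ne_zero ℓ).symm hg hg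
  refine integral_mul_log_div_nonneg hc (fun _ => (hg_pos _).le)
    (fun θs => one_div_mul_sum_pos hL fun ℓ => hg_pos _)
    (integrable_comp_eval hg) ?_ ?_
  · simp_rw [hmul_avg]
    exact (integrable_finsetSum _ fun ℓ _ => hpair ℓ).const_mul _
  · simp_rw [hmul_avg]
    rw [integral_const_mul, integral_finsetSum _ fun ℓ _ => hpair ℓ]
    simp only [integral_comp_eval_mul_comp_eval P (Fin.succ_ne_zero _).symm hg.aemeasurable
      hg.aemeasurable, integral_comp_eval (μ := fun _ => P) hg.aestronglyMeasurable, sum_const,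
      card_univ, Fintype.card_fin, nsmul_eq_mul]
    field_simp

theorem SNMC_ge_total_EIG_general
    {Θ Y : Type*} [MeasurableSpace Θ] [MeasurableSpace Y]
    (P : Measure Θ) [IsProbabilityMeasure P]
    (ν : Measure Y) [SigmaFinite ν]
    (K L : ℕ) (hL : 0 < L)
    (lik : Fin K → Θ → Y → ℝ)
    (hlik_pos : ∀ k θ y, 0 < lik k θ y)
    (pmarg : (Fin K → Y) → ℝ)
    (hpmarg : ∀ ys, pmarg ys = ∫ θ, ∏ k, lik k θ (ys k) ∂P)
    (hpmarg_pos : ∀ ys, 0 < pmarg ys)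
    (hItot_int : Integrable (fun z : Θ × (Fin K → Y) =>
      (∏ k, lik k z.1 (z.2 k)) * Real.log ((∏ k, lik k z.1 (z.2 k)) / pmarg z.2))
      (P.prod (Measure.pi fun _ => ν)))
    (hSNMC_int : Integrable (fun z : (Fin (L + 1) → Θ) × (Fin K → Y) =>
      (∏ k, lik k (z.1 0) (z.2 k)) *
        Real.log ((∏ k, lik k (z.1 0) (z.2 k)) /
          ((1 / (L : ℝ)) * ∑ ℓ : Fin L, ∏ k, lik k (z.1 ℓ.succ) (z.2 k))))
      ((Measure.pi fun _ => P).prod (Measure.pi fun _ => ν))) :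
    (∫ θ₀ : Θ,
        ∫ ys : Fin K → Y,
          (∏ k, lik k θ₀ (ys k)) *
            Real.log ((∏ k, lik k θ₀ (ys k)) / pmarg ys)
          ∂(Measure.pi fun _ => ν)
      ∂P)
    ≤ ∫ θs : Fin (L + 1) → Θ,
        ∫ ys : Fin K → Y,
          (∏ k, lik k (θs 0) (ys k)) *
            Real.log ((∏ k, lik k (θs 0) (ys k)) /
              ((1 / (L : ℝ)) * ∑ ℓ : Fin L, ∏ k, lik k (θs ℓ.succ) (ys k)))
          ∂(Measure.pi fun _ => ν)
      ∂(Measure.pi fun _ => P) := by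
  have hf_pos : ∀ θ (ys : Fin K → Y), 0 < ∏ k, lik k θ (ys k) := fun θ ys =>
    prod_pos fun k _ => hlik_pos k θ (ys k)
  -- `pmarg ys ≠ 0`, so its defining Bochner integral is not the junk value `0`
  have hf_int : ∀ ys : Fin K → Y, Integrable (fun θ => ∏ k, lik k θ (ys k)) P := fun ys =>
    by_contra fun h => (hpmarg_pos ys).ne' ((hpmarg ys).trans (integral_undef h))
  have hT := measurePreserving_eval_prod_s9 P (Measure.pi fun _ : Fin K => ν) (0 : Fin (L + 1))
  have hItot_int' : Integrable (fun w : (Fin (L + 1) → Θ) × (Fin K → Y) =>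
      (∏ k, lik k (w.1 0) (w.2 k)) * log ((∏ k, lik k (w.1 0) (w.2 k)) / pmarg w.2)) _ :=
    hT.integrable_comp_of_integrable hItot_int
  rw [integral_integral hItot_int, integral_integral hSNMC_int,
    ← hT.integral_comp_of_aestronglyMeasurable hItot_int.aestronglyMeasurable, ← sub_nonneg,
    ← integral_sub hSNMC_int hItot_int']
  refine le_of_le_of_eq ?_ (integral_prod_symm _ (hSNMC_int.sub hItot_int')).symm
  refine integral_nonneg fun ys => ?_
  refine (integral_mul_log_div_average_nonneg P hL (hf_pos · ys) (hf_int ys)).trans_eq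
    (integral_congr_ae (.of_forall fun θs => ?_))
  rw [← hpmarg]
  exact (mul_log_div_sub_mul_log_div (hf_pos _ ys).ne'
    (one_div_mul_sum_pos hL fun ℓ => hf_pos _ ys).ne' (hpmarg_pos ys).ne').symm

/-- SNMC is an upper bound on the total expected information gain: with
`θ₀ ~ P`, `Y₁,…,Y_K` drawn given `θ₀`, and `θ₁,…,θ_L` i.i.d. from the prior
independent of the data, the nested Monte Carlo quantity using the `L`
contrastive samples in the denominator upper-bounds `I_total`. -/
theorem SNMC_ge_total_EIG
    {Θ Y : Type*} [MeasurableSpace Θ] [MeasurableSpace Y]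
    (P : Measure Θ) [IsProbabilityMeasure P]
    (ν : Measure Y) [SigmaFinite ν]
    (K L : ℕ) (hL : 0 < L)
    (lik : Fin K → Θ → Y → ℝ)
    (hlik_meas : ∀ k, Measurable (Function.uncurry (lik k)))
    (hlik_pos : ∀ k θ y, 0 < lik k θ y)
    (hlik_int : ∀ k θ, ∫ y, lik k θ y ∂ν = 1)
    (pmarg : (Fin K → Y) → ℝ)
    (hpmarg : ∀ ys, pmarg ys = ∫ θ, ∏ k, lik k θ (ys k) ∂P)
    (hpmarg_pos : ∀ ys, 0 < pmarg ys)
    (hItot_int : Integrable (fun z : Θ × (Fin K → Y) =>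
      (∏ k, lik k z.1 (z.2 k)) * Real.log ((∏ k, lik k z.1 (z.2 k)) / pmarg z.2))
      (P.prod (Measure.pi fun _ => ν)))
    (hSNMC_int : Integrable (fun z : (Fin (L + 1) → Θ) × (Fin K → Y) =>
      (∏ k, lik k (z.1 0) (z.2 k)) *
        Real.log ((∏ k, lik k (z.1 0) (z.2 k)) /
          ((1 / (L : ℝ)) * ∑ ℓ : Fin L, ∏ k, lik k (z.1 ℓ.succ) (z.2 k))))
      ((Measure.pi fun _ => P).prod (Measure.pi fun _ => ν))) :
    (∫ θ₀ : Θ,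
        ∫ ys : Fin K → Y,
          (∏ k, lik k θ₀ (ys k)) *
            Real.log ((∏ k, lik k θ₀ (ys k)) / pmarg ys)
          ∂(Measure.pi fun _ => ν)
      ∂P)
    ≤ ∫ θs : Fin (L + 1) → Θ,
        ∫ ys : Fin K → Y,
          (∏ k, lik k (θs 0) (ys k)) *
            Real.log ((∏ k, lik k (θs 0) (ys k)) /
              ((1 / (L : ℝ)) * ∑ ℓ : Fin L, ∏ k, lik k (θs ℓ.succ) (ys k)))
          ∂(Measure.pi fun _ => ν)
      ∂(Measure.pi fun _ => P) :=
  SNMC_ge_total_EIG_general P ν K L hL lik hlik_pos pmarg hpmarg hpmarg_pos hItot_int hSNMC_int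
end
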